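/- For b1, b2, b3, b4 ∈ ℂ let B1_{b1,b2,b3,b4} denote the ℂ-vector space with basis {L, W, x} equipped with the operations extending W(1,0) by x∘L = x, L∘x = 2b1·L + b2·W − x, x∘W = 0, W∘x = b1·W, x∘x = b1²·L + b1b2·W, [x,L] = −b1b3·L − b2b3·W + b3·x, [x,W] = −b1b4·L − b2b4·W + b4·x. Then: (i) B1_{b1,b2,b3,b4} is a Gel'fand-Dorfman bialgebra containing W(1,0) as a subalgebra; (ii) B1_{b1,b2,b3,b4} is equivalent to B1_{b1',b2',b3',b4'} if and only if there exist c1, c2 ∈ ℂ and β ∈ ℂ* with b1 = β·b1' + c1, b2 = β·b2' + c2, b3 = b3' and b4 = b4'; (iii) consequently, every B1_{b1,b2,b3,b4} is equivalent to B1_{0,0,b3,b4}, and B1_{0,0,b3,b4} is equivalent to B1_{0,0,b3',b4'} if and only if b3 = b3' and b4 = b4'. -/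
import Mathlib

namespace GDExt

def IsNovikov {M : Type*} [AddCommGroup M] (mul : M → M → M) : Prop :=
  (∀ a b c, mul (mul a b) c - mul a (mul b c) = mul (mul b a) c - mul b (mul a c)) ∧
  ∀ a b c, mul (mul a b) c = mul (mul a c) b

def IsLieBracket {M : Type*} [AddCommGroup M] (br : M → M → M) : Prop :=
  (∀ a, br a a = 0) ∧ ∀ a b c, br a (br b c) = br (br a b) c + br b (br a c)

def IsGD {M : Type*} [AddCommGroup M] (mul br : M → M → M) : Prop :=
  IsNovikov mul ∧ IsLieBracket br ∧
  ∀ a b c, br a (mul b c) - br c (mul b a) + mul (br b a) c - mul (br b c) a - mul b (br a c) = 0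

variable {K : Type*} [Field K]
variable {A V : Type*} [AddCommGroup A] [Module K A] [AddCommGroup V] [Module K V]

/-- First component bilinear product of the unified product `A ♮ V`. -/
def uniMul (circ : A →ₗ[K] A →ₗ[K] A) (lA rA : A →ₗ[K] Module.End K V)
    (lV rV : V →ₗ[K] Module.End K A) (f : V →ₗ[K] V →ₗ[K] A)
    (st : V →ₗ[K] V →ₗ[K] V) : A × V → A × V → A × V :=
  fun p q =>
    (circ p.1 q.1 + lV p.2 q.1 + rV q.2 p.1 + f p.2 q.2,
     st p.2 q.2 + lA p.1 q.2 + rA q.1 p.2)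

/-- Bracket of the unified product `A ♮ V`. -/
def uniBr (brk : A →ₗ[K] A →ₗ[K] A) (tl : V →ₗ[K] A →ₗ[K] V) (tr : V →ₗ[K] A →ₗ[K] A)
    (hm : V →ₗ[K] V →ₗ[K] A) (vbr : V →ₗ[K] V →ₗ[K] V) : A × V → A × V → A × V :=
  fun p q =>
    (brk p.1 q.1 + tr p.2 q.1 - tr q.2 p.1 + hm p.2 q.2,
     vbr p.2 q.2 + tl p.2 q.1 - tl q.2 p.1)

end GDExt

namespace GDExt

/-- Equivalence of GD bialgebra structures on `ℂL ⊕ ℂW ⊕ ℂx` (coordinates `0 ↦ L`,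
`1 ↦ W`, `2 ↦ x`): a GD bialgebra isomorphism restricting to the identity on
`ℂL ⊕ ℂW`. -/
def GDequiv3 (m br m' br' : (Fin 3 → ℂ) → (Fin 3 → ℂ) → (Fin 3 → ℂ)) : Prop :=
  ∃ φ : (Fin 3 → ℂ) ≃ₗ[ℂ] (Fin 3 → ℂ),
    (∀ u v, φ (m u v) = m' (φ u) (φ v)) ∧
    (∀ u v, φ (br u v) = br' (φ u) (φ v)) ∧
    (∀ u : Fin 3 → ℂ, u 2 = 0 → φ u = u)

end GDExt

namespace GDExt

/-- The Novikov product of `B1_{b1,b2,b3,b4}` in the basis `L = e0, W = e1, x = e2`. -/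
def B1mul (b1 b2 : ℂ) : (Fin 3 → ℂ) → (Fin 3 → ℂ) → (Fin 3 → ℂ) :=
  fun u v =>
    ![u 0 * v 0 + 2 * b1 * (u 0 * v 2) + b1 ^ 2 * (u 2 * v 2),
      b2 * (u 0 * v 2) + u 1 * v 0 + b1 * (u 1 * v 2) + b1 * b2 * (u 2 * v 2),
      -(u 0 * v 2) + u 2 * v 0]

/-- The Lie bracket of `B1_{b1,b2,b3,b4}`. -/
def B1br (b1 b2 b3 b4 : ℂ) : (Fin 3 → ℂ) → (Fin 3 → ℂ) → (Fin 3 → ℂ) :=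
  fun u v =>
    ![-(b1 * b3) * (u 2 * v 0 - u 0 * v 2) - b1 * b4 * (u 2 * v 1 - u 1 * v 2),
      -(b2 * b3) * (u 2 * v 0 - u 0 * v 2) - b2 * b4 * (u 2 * v 1 - u 1 * v 2),
      b3 * (u 2 * v 0 - u 0 * v 2) + b4 * (u 2 * v 1 - u 1 * v 2)]

/-- the linear change of basis fixing L, W and sending x to c1 L + c2 W + β x -/
noncomputable def phiEquiv (c1 c2 β : ℂ) (hβ : β ≠ 0) : (Fin 3 → ℂ) ≃ₗ[ℂ] (Fin 3 → ℂ) where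
  toFun u := ![u 0 + c1 * u 2, u 1 + c2 * u 2, β * u 2]
  invFun u := ![u 0 - c1 / β * u 2, u 1 - c2 / β * u 2, β⁻¹ * u 2]
  map_add' u v := by funext i; fin_cases i <;> simp <;> ring
  map_smul' a u := by funext i; fin_cases i <;> simp <;> ring
  left_inv u := by
    funext i; fin_cases i <;> simp <;> field_simp <;> ring
  right_inv u := by
    funext i; fin_cases i <;> simp <;> field_simp <;> ring

lemma phiEquiv_apply (c1 c2 β : ℂ) (hβ : β ≠ 0) (u : Fin 3 → ℂ) :
    phiEquiv c1 c2 β hβ u = ![u 0 + c1 * u 2, u 1 + c2 * u 2, β * u 2] := rfl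

/-- backward construction -/
lemma equiv_of (b1' b2' b3 b4 c1 c2 β : ℂ) (hβ : β ≠ 0) :
    GDequiv3 (B1mul (β * b1' + c1) (β * b2' + c2)) (B1br (β * b1' + c1) (β * b2' + c2) b3 b4)
      (B1mul b1' b2') (B1br b1' b2' b3 b4) := by
  refine ⟨phiEquiv c1 c2 β hβ, ?_, ?_, ?_⟩
  · intro u v
    funext i
    fin_cases i <;>
      simp [B1mul, phiEquiv_apply, Matrix.cons_val_zero, Matrix.cons_val_one] <;> ring
  · intro u v
    funext i
    fin_cases i <;>
      simp [B1br, phiEquiv_apply, Matrix.cons_val_zero, Matrix.cons_val_one] <;> ring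
  · intro u hu
    funext i
    fin_cases i <;> simp [phiEquiv_apply, hu]

set_option maxHeartbeats 800000 in
lemma of_equiv (b1 b2 b3 b4 b1' b2' b3' b4' : ℂ)
    (h : GDequiv3 (B1mul b1 b2) (B1br b1 b2 b3 b4) (B1mul b1' b2') (B1br b1' b2' b3' b4')) :
    ∃ c1 c2 β : ℂ, β ≠ 0 ∧ b1 = β * b1' + c1 ∧ b2 = β * b2' + c2 ∧ b3 = b3' ∧ b4 = b4' := by
  obtain ⟨φ, hm, hbr, hfix⟩ := h
  set p : Fin 3 → ℂ := φ ![0, 0, 1] with hp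
  have hβ : p 2 ≠ 0 := by
    intro h0
    have h2 : φ ![0, 0, 1] = φ p := by rw [← hp, hfix p h0]
    have h3 := φ.injective h2
    rw [← h3] at h0
    simp at h0
  have hphi : ∀ u : Fin 3 → ℂ, φ u = ![u 0 + u 2 * p 0, u 1 + u 2 * p 1, u 2 * p 2] := by
    intro u
    have hu : u = ![u 0, u 1, 0] + u 2 • ![0, 0, 1] := by
      funext i; fin_cases i <;> simp
    rw [hu, map_add, map_smul, hfix ![u 0, u 1, 0] (by simp), ← hp]
    funext i; fin_cases i <;> simp <;> ring
  refine ⟨p 0, p 1, p 2, hβ, ?_, ?_, ?_, ?_⟩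
  · have key := hm ![1, 0, 0] ![0, 0, 1]
    rw [hphi (B1mul b1 b2 _ _), hphi ![1, 0, 0], hphi ![0, 0, 1]] at key
    have e0 := congrFun key 0
    simp [B1mul] at e0
    linear_combination e0 / 2
  · have key := hm ![1, 0, 0] ![0, 0, 1]
    rw [hphi (B1mul b1 b2 _ _), hphi ![1, 0, 0], hphi ![0, 0, 1]] at key
    have e1 := congrFun key 1
    simp [B1mul] at e1
    linear_combination e1
  · have key := hbr ![0, 0, 1] ![1, 0, 0]
    rw [hphi (B1br b1 b2 b3 b4 _ _), hphi ![0, 0, 1], hphi ![1, 0, 0]] at key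
    have e2 := congrFun key 2
    simp [B1br] at e2
    rcases e2 with e2 | e2
    · exact e2
    · exact absurd e2 hβ
  · have key := hbr ![0, 0, 1] ![0, 1, 0]
    rw [hphi (B1br b1 b2 b3 b4 _ _), hphi ![0, 0, 1], hphi ![0, 1, 0]] at key
    have e2 := congrFun key 2
    simp [B1br] at e2
    rcases e2 with e2 | e2
    · exact e2
    · exact absurd e2 hβ

/-- Case B1. -/
theorem caseB1 :
    (∀ b1 b2 b3 b4 : ℂ, IsGD (B1mul b1 b2) (B1br b1 b2 b3 b4) ∧
      ∀ u v : Fin 3 → ℂ, u 2 = 0 → v 2 = 0 →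
        B1mul b1 b2 u v = ![u 0 * v 0, u 1 * v 0, 0] ∧
        B1br b1 b2 b3 b4 u v = 0) ∧
    (∀ b1 b2 b3 b4 b1' b2' b3' b4' : ℂ,
      GDequiv3 (B1mul b1 b2) (B1br b1 b2 b3 b4) (B1mul b1' b2') (B1br b1' b2' b3' b4') ↔
        ∃ c1 c2 β : ℂ, β ≠ 0 ∧ b1 = β * b1' + c1 ∧ b2 = β * b2' + c2 ∧
          b3 = b3' ∧ b4 = b4') ∧
    (∀ b1 b2 b3 b4 : ℂ,
      GDequiv3 (B1mul b1 b2) (B1br b1 b2 b3 b4) (B1mul 0 0) (B1br 0 0 b3 b4)) ∧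
    (∀ b3 b4 b3' b4' : ℂ,
      GDequiv3 (B1mul 0 0) (B1br 0 0 b3 b4) (B1mul 0 0) (B1br 0 0 b3' b4') ↔
        b3 = b3' ∧ b4 = b4') := by
  refine ⟨?_, ?_, ?_, ?_⟩
  · intro b1 b2 b3 b4
    refine ⟨⟨⟨?_, ?_⟩, ⟨?_, ?_⟩, ?_⟩, ?_⟩
    · intro a b c; funext i; fin_cases i <;> simp [B1mul] <;> ring
    · intro a b c; funext i; fin_cases i <;> simp [B1mul] <;> ring
    · intro a; funext i; fin_cases i <;> simp [B1br] <;> ring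
    · intro a b c; funext i; fin_cases i <;> simp [B1br] <;> ring
    · intro a b c; funext i; fin_cases i <;> simp [B1mul, B1br] <;> ring
    · intro u v hu hv
      constructor
      · funext i; fin_cases i <;> simp [B1mul, hu, hv]
      · funext i; fin_cases i <;> simp [B1br, hu, hv]
  · intro b1 b2 b3 b4 b1' b2' b3' b4'
    constructor
    · exact of_equiv b1 b2 b3 b4 b1' b2' b3' b4'
    · rintro ⟨c1, c2, β, hβ, h1, h2, h3, h4⟩
      subst h1 h2 h3 h4
      exact equiv_of b1' b2' b3 b4 c1 c2 β hβ
  · intro b1 b2 b3 b4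
    have := equiv_of 0 0 b3 b4 b1 b2 1 one_ne_zero
    simpa using this
  · intro b3 b4 b3' b4'
    constructor
    · intro h
      obtain ⟨c1, c2, β, hβ, _, _, h3, h4⟩ := of_equiv 0 0 b3 b4 0 0 b3' b4' h
      exact ⟨h3, h4⟩
    · rintro ⟨h3, h4⟩
      subst h3 h4
      have := equiv_of 0 0 b3 b4 0 0 1 one_ne_zero
      simpa using this

end GDExt
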